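/- arXiv:0903.1117 — 3 statements merged into one kernel-verified Lean document; each statement's English description precedes it below -/
import Mathlib

section
/- For every natural n and complex s with Re(s) > 0, the Laplace transform of the n-th Laguerre polynomial L_n(t) = ∑_{ν=0}^n C(n,ν)·(-t)^ν/ν! equals (s-1)^n / s^{n+1}; i.e., ∫_0^∞ e^{-st} L_n(t) dt = (s-1)^n / s^{n+1}. -/
open MeasureTheory Set Filter Complex Real Topology

lemma norm_aux (s : ℂ) (k : ℕ) (t : ℝ) (ht : 0 ≤ t) :
    ‖(t : ℂ) ^ k * Complex.exp (-s * t)‖ = t ^ k * Real.exp (-s.re * t) := by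
  rw [norm_mul, norm_pow, Complex.norm_exp]
  simp [abs_of_nonneg ht]

lemma tendsto_aux {b : ℝ} (hb : 0 < b) (k : ℕ) :
    Tendsto (fun x : ℝ => x ^ k * Real.exp (-b * x)) atTop (𝓝 0) := by
  have h1 := (tendsto_pow_mul_exp_neg_atTop_nhds_zero k).comp
    (tendsto_id.const_mul_atTop hb)
  have h2 : Tendsto (fun x : ℝ => (1 / b ^ k) * ((b * x) ^ k * Real.exp (-(b * x))))
      atTop (𝓝 ((1 / b ^ k) * 0)) := h1.const_mul _
  simp only [mul_zero] at h2
  refine h2.congr fun x => ?_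
  rw [mul_pow]
  field_simp

lemma contAux (s : ℂ) (k : ℕ) :
    Continuous (fun t : ℝ => (t : ℂ) ^ k * Complex.exp (-s * t)) :=
  (Complex.continuous_ofReal.pow k).mul (Complex.continuous_exp.comp
    (continuous_const.mul Complex.continuous_ofReal))

lemma integrableOn_aux {s : ℂ} (hs : 0 < s.re) (k : ℕ) :
    IntegrableOn (fun t : ℝ => (t : ℂ) ^ k * Complex.exp (-s * t)) (Ioi 0) := by
  have hreal : IntegrableOn (fun t : ℝ => t ^ (k : ℝ) * Real.exp (-s.re * t ^ (1:ℝ))) (Ioi 0) :=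
    integrableOn_rpow_mul_exp_neg_mul_rpow
      (lt_of_lt_of_le neg_one_lt_zero (Nat.cast_nonneg k)) one_pos hs
  have hreal' : IntegrableOn (fun t : ℝ => t ^ k * Real.exp (-s.re * t)) (Ioi 0) := by
    refine hreal.congr_fun (fun t ht => ?_) measurableSet_Ioi
    dsimp only
    rw [Real.rpow_one, Real.rpow_natCast]
  refine ⟨(contAux s k).continuousOn.aestronglyMeasurable measurableSet_Ioi, ?_⟩
  refine hreal'.hasFiniteIntegral.congr' ?_
  filter_upwards [ae_restrict_mem measurableSet_Ioi] with t ht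
  rw [norm_aux s k t (le_of_lt ht), Real.norm_eq_abs, _root_.abs_of_nonneg (mul_nonneg (pow_nonneg (le_of_lt ht) k) (Real.exp_nonneg _))]

lemma hasDerivAt_aux {s : ℂ} (hs : s ≠ 0) (t : ℝ) :
    HasDerivAt (fun x : ℝ => -Complex.exp (-s * x) / s) (Complex.exp (-s * t)) t := by
  have h : HasDerivAt (fun x : ℝ => Complex.exp (-s * x))
      (Complex.exp (-s * t) * (-s)) t := by
    have := (((hasDerivAt_id (t : ℂ)).const_mul (-s)).cexp).comp_ofReal
    simpa using this
  have h2 := (h.div_const s).neg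
  convert h2 using 1
  · rfl
  · funext x; rw [neg_div]; rfl
  · rw [mul_neg, neg_div, neg_neg, mul_div_assoc, div_self hs, mul_one]

lemma norm_cexp_aux (s : ℂ) (x : ℝ) :
    ‖Complex.exp (-s * x)‖ = Real.exp (-s.re * x) := by
  rw [Complex.norm_exp]
  congr 1
  simp [Complex.mul_re]

lemma key {s : ℂ} (hs : 0 < s.re) : ∀ k : ℕ,
    ∫ t in Ioi (0:ℝ), (t : ℂ) ^ k * Complex.exp (-s * t)
      = (Nat.factorial k : ℂ) / s ^ (k + 1) := by
  have hsne : s ≠ 0 := fun h => by simp [h] at hs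
  intro k
  induction k with
  | zero =>
    have hcont : ContinuousWithinAt (fun x : ℝ => -Complex.exp (-s * x) / s) (Ici 0) 0 :=
      (hasDerivAt_aux hsne 0).continuousAt.continuousWithinAt
    have htend : Tendsto (fun x : ℝ => -Complex.exp (-s * x) / s) atTop (𝓝 0) := by
      rw [tendsto_zero_iff_norm_tendsto_zero]
      have hb := (tendsto_aux hs 0).const_mul (1 / ‖s‖)
      rw [mul_zero] at hb
      refine squeeze_zero_norm' ?_ hb
      filter_upwards [eventually_ge_atTop (0:ℝ)] with x hx
      rw [norm_norm, norm_div, norm_neg, norm_cexp_aux]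
      apply le_of_eq
      simp only [pow_zero, one_mul]
      rw [div_eq_mul_inv, mul_comm, one_div]
    have heq : (fun t : ℝ => (t:ℂ)^0 * Complex.exp (-s * t))
        = fun t : ℝ => Complex.exp (-s * t) := by funext t; simp
    have hint : IntegrableOn (fun x : ℝ => Complex.exp (-s * x)) (Ioi 0) := by
      simpa [heq] using integrableOn_aux hs 0
    have := integral_Ioi_of_hasDerivAt_of_tendsto hcont
      (fun x _ => hasDerivAt_aux hsne x) hint htend
    simp only [Complex.ofReal_zero, mul_zero, neg_zero, Complex.exp_zero] at this
    rw [heq, this]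
    simp [Nat.factorial]
    field_simp
  | succ k ih =>
    have hu : ∀ x ∈ Ioi (0:ℝ), HasDerivAt (fun x : ℝ => ((x:ℝ):ℂ) ^ (k+1))
        ((((k:ℂ)+1) * (x:ℂ) ^ k)) x := by
      intro x _
      have := ((hasDerivAt_pow (k+1) ((x:ℝ):ℂ)).comp_ofReal)
      simpa [mul_comm] using this
    have hv : ∀ x ∈ Ioi (0:ℝ), HasDerivAt (fun x : ℝ => -Complex.exp (-s * x) / s)
        (Complex.exp (-s * x)) x := fun x _ => hasDerivAt_aux hsne x
    have huv' : IntegrableOn ((fun x : ℝ => ((x:ℝ):ℂ) ^ (k+1)) *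
        (fun x : ℝ => Complex.exp (-s * x))) (Ioi 0) := by
      simpa [Pi.mul_def] using integrableOn_aux hs (k+1)
    have hu'v : IntegrableOn ((fun x : ℝ => ((k:ℂ)+1) * (x:ℂ) ^ k) *
        (fun x : ℝ => -Complex.exp (-s * x) / s)) (Ioi 0) := by
      have h0 : IntegrableOn
          (fun x : ℝ => (-((k:ℂ)+1)/s) * ((x:ℂ)^k * Complex.exp (-s * x))) (Ioi 0) :=
        (integrableOn_aux hs k).const_mul _
      refine h0.congr_fun (fun x _ => ?_) measurableSet_Ioi
      simp only [Pi.mul_apply]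
      field_simp
    have h_zero : Tendsto ((fun x : ℝ => ((x:ℝ):ℂ) ^ (k+1)) *
        (fun x : ℝ => -Complex.exp (-s * x) / s)) (𝓝[>] (0:ℝ)) (𝓝 0) := by
      have hc : Continuous (fun x : ℝ => ((x:ℝ):ℂ) ^ (k+1) * (-Complex.exp (-s * x) / s)) := by
        continuity
      have h3 := hc.tendsto 0
      simp only [Complex.ofReal_zero, zero_pow (Nat.succ_ne_zero k), zero_mul] at h3
      exact h3.mono_left nhdsWithin_le_nhds
    have h_infty : Tendsto ((fun x : ℝ => ((x:ℝ):ℂ) ^ (k+1)) *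
        (fun x : ℝ => -Complex.exp (-s * x) / s)) atTop (𝓝 0) := by
      rw [tendsto_zero_iff_norm_tendsto_zero]
      have hb := (tendsto_aux hs (k+1)).const_mul (1 / ‖s‖)
      rw [mul_zero] at hb
      refine squeeze_zero_norm' ?_ hb
      filter_upwards [eventually_ge_atTop (0:ℝ)] with x hx
      rw [norm_norm, Pi.mul_apply, norm_mul, norm_div, norm_neg, norm_cexp_aux,
        norm_pow, Complex.norm_real, Real.norm_eq_abs, _root_.abs_of_nonneg hx]
      apply le_of_eq
      ring
    have ibp := integral_Ioi_mul_deriv_eq_deriv_mul hu hv huv' hu'v h_zero h_infty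
    have ibp' : ∫ x in Ioi (0:ℝ), (x:ℂ)^(k+1) * Complex.exp (-s * x)
        = 0 - 0 - ∫ x in Ioi (0:ℝ), ((k:ℂ)+1)*(x:ℂ)^k * (-Complex.exp (-s * x)/s) := ibp
    have hI : (∫ x in Ioi (0:ℝ), ((k:ℂ)+1)*(x:ℂ)^k * (-Complex.exp (-s * x)/s))
        = (-((k:ℂ)+1)/s) * ((Nat.factorial k : ℂ) / s^(k+1)) := by
      rw [← ih, ← MeasureTheory.integral_const_mul]
      refine setIntegral_congr_fun measurableSet_Ioi (fun x _ => ?_)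
      ring
    rw [hI] at ibp'
    rw [show (fun t : ℝ => (t:ℂ)^(k+1) * Complex.exp (-s * t))
      = (fun x : ℝ => ((x:ℝ):ℂ) ^ (k+1) * Complex.exp (-s * x)) from rfl, ibp',
      Nat.factorial_succ]
    push_cast
    field_simp
    ring



/-- The `n`-th Laguerre polynomial `L_n(t) = ∑_{ν=0}^n C(n,ν) (-t)^ν / ν!`. -/
noncomputable def laguerre (n : ℕ) (t : ℝ) : ℝ :=
  ∑ ν ∈ Finset.range (n + 1), (Nat.choose n ν : ℝ) * (-t) ^ ν / (Nat.factorial ν : ℝ)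

theorem laplace_laguerre (n : ℕ) (s : ℂ) (hs : 0 < s.re) :
    ∫ t in Set.Ioi (0 : ℝ), Complex.exp (-s * t) * (laguerre n t : ℂ) =
      (s - 1) ^ n / s ^ (n + 1) := by
  have hsne : s ≠ 0 := fun h => by simp [h] at hs
  have hfun : EqOn (fun t : ℝ => Complex.exp (-s * t) * (laguerre n t : ℂ))
      (fun t : ℝ => ∑ ν ∈ Finset.range (n+1),
        ((Nat.choose n ν : ℂ) * (-1)^ν / (Nat.factorial ν : ℂ)) *
          ((t:ℂ)^ν * Complex.exp (-s * t))) (Ioi 0) := by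
    intro t _
    simp only [laguerre]
    push_cast
    rw [Finset.mul_sum]
    refine Finset.sum_congr rfl fun ν _ => ?_
    ring
  rw [setIntegral_congr_fun measurableSet_Ioi hfun,
    MeasureTheory.integral_finset_sum _ (fun ν _ => ((integrableOn_aux hs ν).const_mul _))]
  have hterm : ∀ ν ∈ Finset.range (n+1),
      (∫ t in Ioi (0:ℝ), ((Nat.choose n ν : ℂ) * (-1)^ν / (Nat.factorial ν : ℂ)) *
        ((t:ℂ)^ν * Complex.exp (-s * t)))
      = ((Nat.choose n ν : ℂ) * (-1)^ν * s^(n-ν)) / s^(n+1) := by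
    intro ν hν
    rw [MeasureTheory.integral_const_mul, key hs ν]
    have hfact : (Nat.factorial ν : ℂ) ≠ 0 := by
      exact_mod_cast (Nat.factorial_pos ν).ne'
    rw [show s^(n+1) = s^(ν+1) * s^(n-ν) by
      rw [← pow_add]; congr 1; have := Finset.mem_range.mp hν; omega]
    field_simp
  rw [Finset.sum_congr rfl hterm, ← Finset.sum_div]
  congr 1
  rw [show (s - 1 : ℂ) = -1 + s by ring, add_pow]
  refine Finset.sum_congr rfl fun ν _ => by ring
end

section
/- For every natural number n and every real t ≥ 0, the Laguerre polynomial satisfies |L_n(t)| ≤ e^{t/2}. -/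
open Finset

namespace LagAux

noncomputable def Efun (t : ℝ) (q m : ℕ) : ℝ :=
  if q ≤ m then t ^ (m - q) / (m - q).factorial else 0

noncomputable def Av (n : ℕ) (t : ℝ) (j : ℕ) : ℝ := (n.choose j : ℝ) * (-t) ^ (n - j)

noncomputable def Cc (n : ℕ) (t : ℝ) (m : ℕ) : ℝ :=
  ∑ j ∈ range (n + 1), Av n t j * Efun t j m

lemma nat_key (j k m : ℕ) (hj : j ≤ m) (hk : k ≤ m) :
    ∑ l ∈ range (k + 1),
        l.factorial * j.choose l * k.choose l *
          ((k - l).factorial * (m - j).choose (k - l) * (m - k).factorial)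
      = m.factorial := by
  have h1 : ∀ l ∈ range (k + 1),
      l.factorial * j.choose l * k.choose l *
          ((k - l).factorial * (m - j).choose (k - l) * (m - k).factorial)
        = j.choose l * (m - j).choose (k - l) * (k.factorial * (m - k).factorial) := by
    intro l hl
    have hlk : l ≤ k := Nat.lt_succ_iff.mp (mem_range.mp hl)
    have h2 := Nat.choose_mul_factorial_mul_factorial hlk
    calc l.factorial * j.choose l * k.choose l *
          ((k - l).factorial * (m - j).choose (k - l) * (m - k).factorial)
        = j.choose l * (m - j).choose (k - l) *
            ((k.choose l * l.factorial * (k - l).factorial) * (m - k).factorial) := by ring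
      _ = j.choose l * (m - j).choose (k - l) * (k.factorial * (m - k).factorial) := by rw [h2]
  rw [Finset.sum_congr rfl h1, ← Finset.sum_mul]
  have hv : ∑ l ∈ range (k + 1), j.choose l * (m - j).choose (k - l) = m.choose k := by
    have h3 := Nat.add_choose_eq j (m - j) k
    rw [Nat.add_sub_cancel' hj] at h3
    rw [h3, Finset.Nat.sum_antidiagonal_eq_sum_range_succ_mk]
  rw [hv, ← Nat.choose_mul_factorial_mul_factorial hk]
  ring

lemma keyE (t : ℝ) (j k m : ℕ) :
    (m.factorial : ℝ) * Efun t j m * Efun t k m =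
      ∑ l ∈ range (k + 1),
        ((l.factorial * j.choose l * k.choose l : ℕ) : ℝ) * t ^ (j - l) * t ^ (k - l) *
          Efun (t ^ 2) (j + k - l) m := by
  by_cases hj : j ≤ m
  · by_cases hk : k ≤ m
    · -- main case
      have hstep : ∀ l ∈ range (k + 1),
          ((l.factorial * j.choose l * k.choose l : ℕ) : ℝ) * t ^ (j - l) * t ^ (k - l) *
              Efun (t ^ 2) (j + k - l) m
            = ((l.factorial * j.choose l * k.choose l *
                ((k - l).factorial * (m - j).choose (k - l) * (m - k).factorial) : ℕ) : ℝ) *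
                (t ^ (m - j) * t ^ (m - k) / (((m - j).factorial : ℝ) * ((m - k).factorial : ℝ))) := by
        intro l hl
        have hlk : l ≤ k := Nat.lt_succ_iff.mp (mem_range.mp hl)
        by_cases hjl : l ≤ j
        · by_cases hq : j + k - l ≤ m
          · have hkl : k - l ≤ m - j := by omega
            have hsub : m - (j + k - l) = (m - j) - (k - l) := by omega
            have e2 := Nat.choose_mul_factorial_mul_factorial hkl
            -- e2 : (m-j).choose (k-l) * (k-l)! * ((m-j)-(k-l))! = (m-j)!
            have epow : t ^ (j - l) * t ^ (k - l) * (t ^ 2) ^ (m - (j + k - l))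
                = t ^ (m - j) * t ^ (m - k) := by
              rw [← pow_mul, ← pow_add, ← pow_add, ← pow_add]
              congr 1
              omega
            rw [Efun, if_pos hq]
            have hf1 : ((m - (j + k - l)).factorial : ℝ) ≠ 0 := Nat.cast_ne_zero.mpr (Nat.factorial_ne_zero _)
            have hf2 : (((m - j).factorial : ℝ)) ≠ 0 := Nat.cast_ne_zero.mpr (Nat.factorial_ne_zero _)
            have hf3 : (((m - k).factorial : ℝ)) ≠ 0 := Nat.cast_ne_zero.mpr (Nat.factorial_ne_zero _)
            have e2' : ((m - j).choose (k - l) : ℝ) * ((k - l).factorial : ℝ) *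
                ((m - (j + k - l)).factorial : ℝ) = ((m - j).factorial : ℝ) := by
              rw [hsub]
              exact_mod_cast congrArg (Nat.cast (R := ℝ)) e2
            push_cast
            field_simp
            linear_combination (↑(j.choose l) * ↑(k.choose l) *
                ((m - j).factorial : ℝ)) * epow -
              (↑(j.choose l) * ↑(k.choose l) *
                (t ^ (m - j) * t ^ (m - k))) * e2'
          · -- Efun = 0 and choose (m-j) (k-l) = 0
            have h0 : Efun (t ^ 2) (j + k - l) m = 0 := by rw [Efun, if_neg hq]
            have hc0 : (m - j).choose (k - l) = 0 := by
              apply Nat.choose_eq_zero_of_lt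
              omega
            rw [h0, hc0]
            push_cast
            ring
        · -- l > j : j.choose l = 0
          have : j.choose l = 0 := Nat.choose_eq_zero_of_lt (by omega)
          rw [this]
          push_cast
          ring
      rw [Finset.sum_congr rfl hstep, ← Finset.sum_mul]
      rw [← Nat.cast_sum, nat_key j k m hj hk]
      rw [Efun, if_pos hj, Efun, if_pos hk]
      field_simp
    · -- k > m
      have h0 : Efun t k m = 0 := by rw [Efun, if_neg hk]
      rw [h0, mul_zero]
      symm
      apply Finset.sum_eq_zero
      intro l hl
      have hlk : l ≤ k := Nat.lt_succ_iff.mp (mem_range.mp hl)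
      by_cases hq : j + k - l ≤ m
      · have : j.choose l = 0 := Nat.choose_eq_zero_of_lt (by omega)
        rw [this]
        push_cast
        ring
      · rw [Efun, if_neg hq]
        ring
  · -- j > m
    have h0 : Efun t j m = 0 := by rw [Efun, if_neg hj]
    rw [h0, mul_zero, zero_mul]
    symm
    apply Finset.sum_eq_zero
    intro l hl
    have hlk : l ≤ k := Nat.lt_succ_iff.mp (mem_range.mp hl)
    have hq : ¬ (j + k - l ≤ m) := by omega
    rw [Efun, if_neg hq]
    ring

lemma hasSum_Efun (x : ℝ) (q : ℕ) : HasSum (fun m => Efun x q m) (Real.exp x) := by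
  have h0 : HasSum (fun r : ℕ => x ^ r / r.factorial) (Real.exp x) := by
    rw [Real.exp_eq_exp_ℝ]
    exact NormedSpace.expSeries_div_hasSum_exp x
  have hinj : Function.Injective (fun r : ℕ => r + q) := add_left_injective q
  have hvan : ∀ m ∉ Set.range (fun r : ℕ => r + q), Efun x q m = 0 := by
    intro m hm
    have : ¬ q ≤ m := by
      intro h
      exact hm ⟨m - q, Nat.sub_add_cancel h⟩
    rw [Efun, if_neg this]
  have hcomp : (fun m => Efun x q m) ∘ (fun r : ℕ => r + q) = fun r : ℕ => x ^ r / r.factorial := by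
    funext r
    simp only [Function.comp_apply, Efun, if_pos (Nat.le_add_left q r), Nat.add_sub_cancel]
  rw [← Function.Injective.hasSum_iff hinj hvan, hcomp]
  exact h0

lemma bdelta (n : ℕ) (t : ℝ) (l : ℕ) (hl : l ≤ n) :
    ∑ j ∈ range (n + 1), Av n t j * (j.choose l : ℝ) * t ^ (j - l)
      = if l = n then 1 else 0 := by
  have hsplit : ∑ j ∈ range (n + 1), Av n t j * (j.choose l : ℝ) * t ^ (j - l)
      = ∑ j ∈ Ico l (n + 1), Av n t j * (j.choose l : ℝ) * t ^ (j - l) := by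
    rw [range_eq_Ico, ← Finset.sum_Ico_consecutive _ (Nat.zero_le l) (by omega)]
    have h0 : ∑ j ∈ Ico 0 l, Av n t j * (j.choose l : ℝ) * t ^ (j - l) = 0 := by
      apply Finset.sum_eq_zero
      intro j hj
      have : j < l := (mem_Ico.mp hj).2
      simp [Nat.choose_eq_zero_of_lt this]
    rw [h0, zero_add]
  rw [hsplit, Finset.sum_Ico_eq_sum_range]
  have hmid : ∑ i ∈ range (n + 1 - l), Av n t (l + i) * ((l + i).choose l : ℝ) * t ^ (l + i - l)
      = (n.choose l : ℝ) * ∑ i ∈ range ((n - l) + 1),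
          t ^ i * (-t) ^ ((n - l) - i) * ((n - l).choose i : ℝ) := by
    rw [show n + 1 - l = (n - l) + 1 by omega, Finset.mul_sum]
    refine Finset.sum_congr rfl fun i hi => ?_
    have hi' : i ≤ n - l := Nat.lt_succ_iff.mp (mem_range.mp hi)
    have hc := Nat.choose_mul (n := n) (Nat.le_add_right l i)
    have h2 : l + i - l = i := by omega
    have h3 : n - (l + i) = (n - l) - i := by omega
    rw [h2] at hc
    have hc' : ((n.choose (l + i)) : ℝ) * (((l + i).choose l) : ℝ)
        = ((n.choose l) : ℝ) * (((n - l).choose i) : ℝ) := by exact_mod_cast congrArg (Nat.cast (R := ℝ)) hc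
    rw [Av, h2, h3]
    linear_combination ((-t) ^ ((n - l) - i) * t ^ i) * hc'
  rw [hmid, ← add_pow]
  rw [show t + -t = 0 by ring]
  rcases eq_or_lt_of_le hl with rfl | hln
  · simp
  · rw [zero_pow (by omega : n - l ≠ 0)]
    simp [Nat.ne_of_lt hln]

lemma main_hasSum (n : ℕ) (t : ℝ) :
    HasSum (fun m => (m.factorial : ℝ) * (Cc n t m) ^ 2)
      ((n.factorial : ℝ) * Real.exp (t ^ 2)) := by
  have hterm : ∀ m, (m.factorial : ℝ) * (Cc n t m) ^ 2
      = ∑ j ∈ range (n + 1), ∑ k ∈ range (n + 1), ∑ l ∈ range (k + 1),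
          (Av n t j * Av n t k * ((l.factorial * j.choose l * k.choose l : ℕ) : ℝ) *
            t ^ (j - l) * t ^ (k - l)) * Efun (t ^ 2) (j + k - l) m := by
    intro m
    have hsq : (Cc n t m) ^ 2 = ∑ j ∈ range (n + 1), ∑ k ∈ range (n + 1),
        (Av n t j * Efun t j m) * (Av n t k * Efun t k m) := by
      rw [sq, Cc, Finset.sum_mul_sum]
    rw [hsq, Finset.mul_sum]
    refine Finset.sum_congr rfl fun j hj => ?_
    rw [Finset.mul_sum]
    refine Finset.sum_congr rfl fun k hk => ?_
    have hk' : (m.factorial : ℝ) * (Av n t j * Efun t j m * (Av n t k * Efun t k m))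
        = (Av n t j * Av n t k) * ((m.factorial : ℝ) * Efun t j m * Efun t k m) := by ring
    rw [hk', keyE, Finset.mul_sum]
    exact Finset.sum_congr rfl fun l hl => by ring
  have hsum : HasSum (fun m => ∑ j ∈ range (n + 1), ∑ k ∈ range (n + 1), ∑ l ∈ range (k + 1),
      (Av n t j * Av n t k * ((l.factorial * j.choose l * k.choose l : ℕ) : ℝ) *
        t ^ (j - l) * t ^ (k - l)) * Efun (t ^ 2) (j + k - l) m)
      (∑ j ∈ range (n + 1), ∑ k ∈ range (n + 1), ∑ l ∈ range (k + 1),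
        (Av n t j * Av n t k * ((l.factorial * j.choose l * k.choose l : ℕ) : ℝ) *
          t ^ (j - l) * t ^ (k - l)) * Real.exp (t ^ 2)) := by
    refine hasSum_sum fun j hj => hasSum_sum fun k hk => hasSum_sum fun l hl => ?_
    exact (hasSum_Efun (t ^ 2) (j + k - l)).mul_left _
  have hval : (∑ j ∈ range (n + 1), ∑ k ∈ range (n + 1), ∑ l ∈ range (k + 1),
        (Av n t j * Av n t k * ((l.factorial * j.choose l * k.choose l : ℕ) : ℝ) *
          t ^ (j - l) * t ^ (k - l)) * Real.exp (t ^ 2))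
      = (n.factorial : ℝ) * Real.exp (t ^ 2) := by
    have hext : ∀ j ∈ range (n + 1), ∀ k ∈ range (n + 1),
        (∑ l ∈ range (k + 1),
          (Av n t j * Av n t k * ((l.factorial * j.choose l * k.choose l : ℕ) : ℝ) *
            t ^ (j - l) * t ^ (k - l)) * Real.exp (t ^ 2))
        = ∑ l ∈ range (n + 1),
          (Av n t j * Av n t k * ((l.factorial * j.choose l * k.choose l : ℕ) : ℝ) *
            t ^ (j - l) * t ^ (k - l)) * Real.exp (t ^ 2) := by
      intro j hj k hk
      apply Finset.sum_subset
      · apply Finset.range_subset_range.mpr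
        have := Nat.lt_succ_iff.mp (mem_range.mp hk)
        omega
      · intro l hl1 hl2
        have : k < l := by
          have := mem_range.mp hl1
          simp only [mem_range] at hl2
          omega
        rw [Nat.choose_eq_zero_of_lt this]
        push_cast
        ring
    rw [Finset.sum_congr rfl fun j hj => Finset.sum_congr rfl fun k hk => hext j hj k hk]
    have hswap : (∑ j ∈ range (n + 1), ∑ k ∈ range (n + 1), ∑ l ∈ range (n + 1),
        (Av n t j * Av n t k * ((l.factorial * j.choose l * k.choose l : ℕ) : ℝ) *
          t ^ (j - l) * t ^ (k - l)) * Real.exp (t ^ 2))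
        = ∑ l ∈ range (n + 1), ∑ j ∈ range (n + 1), ∑ k ∈ range (n + 1),
        (Av n t j * Av n t k * ((l.factorial * j.choose l * k.choose l : ℕ) : ℝ) *
          t ^ (j - l) * t ^ (k - l)) * Real.exp (t ^ 2) := by
      calc (∑ j ∈ range (n + 1), ∑ k ∈ range (n + 1), ∑ l ∈ range (n + 1),
            (Av n t j * Av n t k * ((l.factorial * j.choose l * k.choose l : ℕ) : ℝ) *
              t ^ (j - l) * t ^ (k - l)) * Real.exp (t ^ 2))
          = ∑ j ∈ range (n + 1), ∑ l ∈ range (n + 1), ∑ k ∈ range (n + 1),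
            (Av n t j * Av n t k * ((l.factorial * j.choose l * k.choose l : ℕ) : ℝ) *
              t ^ (j - l) * t ^ (k - l)) * Real.exp (t ^ 2) :=
          Finset.sum_congr rfl fun j _ => Finset.sum_comm
        _ = ∑ l ∈ range (n + 1), ∑ j ∈ range (n + 1), ∑ k ∈ range (n + 1),
            (Av n t j * Av n t k * ((l.factorial * j.choose l * k.choose l : ℕ) : ℝ) *
              t ^ (j - l) * t ^ (k - l)) * Real.exp (t ^ 2) := Finset.sum_comm
    rw [hswap]
    have hinner : ∀ l ∈ range (n + 1), (∑ j ∈ range (n + 1), ∑ k ∈ range (n + 1),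
        (Av n t j * Av n t k * ((l.factorial * j.choose l * k.choose l : ℕ) : ℝ) *
          t ^ (j - l) * t ^ (k - l)) * Real.exp (t ^ 2))
        = ((l.factorial : ℝ) *
            ((∑ j ∈ range (n + 1), Av n t j * (j.choose l : ℝ) * t ^ (j - l)) *
            (∑ j ∈ range (n + 1), Av n t j * (j.choose l : ℝ) * t ^ (j - l)))) * Real.exp (t ^ 2) := by
      intro l hl
      refine Eq.symm ?_
      simp only [Finset.mul_sum, Finset.sum_mul]
      refine Finset.sum_congr rfl fun j hj => Finset.sum_congr rfl fun k hk => ?_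
      push_cast
      ring
    rw [Finset.sum_congr rfl hinner]
    have hfin : ∀ l ∈ range (n + 1), ((l.factorial : ℝ) *
        ((∑ j ∈ range (n + 1), Av n t j * (j.choose l : ℝ) * t ^ (j - l)) *
        (∑ j ∈ range (n + 1), Av n t j * (j.choose l : ℝ) * t ^ (j - l)))) * Real.exp (t ^ 2)
        = (if l = n then (n.factorial : ℝ) else 0) * Real.exp (t ^ 2) := by
      intro l hl
      have hln : l ≤ n := Nat.lt_succ_iff.mp (mem_range.mp hl)
      rw [bdelta n t l hln]
      split_ifs with h
      · subst h; simp
      · simp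
    rw [Finset.sum_congr rfl hfin, ← Finset.sum_mul]
    congr 1
    simp
  rw [← hval]
  have heq : (fun m => (m.factorial : ℝ) * (Cc n t m) ^ 2)
      = (fun m => ∑ j ∈ range (n + 1), ∑ k ∈ range (n + 1), ∑ l ∈ range (k + 1),
          (Av n t j * Av n t k * ((l.factorial * j.choose l * k.choose l : ℕ) : ℝ) *
            t ^ (j - l) * t ^ (k - l)) * Efun (t ^ 2) (j + k - l) m) := funext hterm
  rw [heq]
  exact hsum

end LagAux

theorem laguerre_bound (n : ℕ) (t : ℝ) (ht : 0 ≤ t) :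
    |laguerre n t| ≤ Real.exp (t / 2) := by
  set s := Real.sqrt t with hs
  have hs2 : s ^ 2 = t := Real.sq_sqrt ht
  have hC : LagAux.Cc n s n = laguerre n t := by
    rw [laguerre, ← Finset.sum_range_reflect, LagAux.Cc]
    refine Finset.sum_congr rfl fun j hj => ?_
    have hj' : j ≤ n := Nat.lt_succ_iff.mp (Finset.mem_range.mp hj)
    rw [LagAux.Av, LagAux.Efun, if_pos hj']
    rw [show n + 1 - 1 - j = n - j from rfl, Nat.choose_symm hj']
    have hpow : (-s) ^ (n - j) * s ^ (n - j) = (-t) ^ (n - j) := by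
      rw [← mul_pow]
      congr 1
      rw [← hs2]
      ring
    field_simp
    rw [← hpow]
    ring
  have hmain := LagAux.main_hasSum n s
  rw [hs2] at hmain
  have h1 : (n.factorial : ℝ) * (laguerre n t) ^ 2 ≤ (n.factorial : ℝ) * Real.exp t := by
    have h0 := le_hasSum hmain n (fun j _ => by positivity)
    rw [hC] at h0
    exact h0
  have h2 : (laguerre n t) ^ 2 ≤ Real.exp t := by
    have hfac : (0 : ℝ) < (n.factorial : ℝ) := by positivity
    exact le_of_mul_le_mul_left h1 hfac
  calc |laguerre n t| = Real.sqrt ((laguerre n t) ^ 2) := (Real.sqrt_sq_eq_abs _).symm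
    _ ≤ Real.sqrt (Real.exp t) := Real.sqrt_le_sqrt h2
    _ = Real.exp (t / 2) := (Real.exp_half t).symm
end

section
/- For n ≥ 1 and complex s with Re(s) > 1, the Laplace transform of f_n(t) = ∑_{m=1}^∞ d_n(m)·𝟙_{t > ln m}·L_n(t - ln m) equals ((s-1)^n / s^{n+1})·ζ(s)^n, i.e., ∫_0^∞ e^{-st} f_n(t) dt = (s-1)^n ζ(s)^n / s^{n+1}. -/
/-- The Piltz divisor function `d_n(m)`. -/
def piltz (n m : ℕ) : ℕ :=
  ((Fintype.piFinset fun _ : Fin n => Finset.Icc 1 m).filter fun f => ∏ i, f i = m).card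

lemma piltz_filter_card (n : ℕ) {d m : ℕ} (hd : 0 < d) (hdm : d ≤ m) :
    (((Fintype.piFinset fun _ : Fin n => Finset.Icc 1 m).filter fun f => ∏ i, f i = d).card)
      = piltz n d := by
  unfold piltz
  congr 1
  ext f
  simp only [Finset.mem_filter, Fintype.mem_piFinset, Finset.mem_Icc]
  constructor
  · rintro ⟨_, hprod⟩
    refine ⟨fun i => ?_, hprod⟩
    have hidvd : f i ∣ d := hprod ▸ Finset.dvd_prod_of_mem f (Finset.mem_univ i)
    exact ⟨Nat.one_le_iff_ne_zero.mpr fun h => by simp [h] at hidvd; omega,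
      Nat.le_of_dvd hd hidvd⟩
  · rintro ⟨hmem, hprod⟩
    refine ⟨fun i => ⟨(hmem i).1, le_trans (hmem i).2 hdm⟩, hprod⟩

lemma piltz_eq (n m : ℕ) : piltz n m = (ArithmeticFunction.zeta ^ n : ArithmeticFunction ℕ) m := by
  induction n generalizing m with
  | zero =>
    unfold piltz
    rcases eq_or_ne m 1 with rfl | hm
    · simp
    · rcases eq_or_ne m 0 with rfl | h0
      · simp
      · rw [pow_zero, ArithmeticFunction.one_apply_ne hm]
        rw [Finset.card_eq_zero, Finset.filter_eq_empty_iff]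
        intro f _
        simpa using hm ∘ Eq.symm
  | succ n ih =>
    rcases eq_or_ne m 0 with rfl | hm0
    · rw [ArithmeticFunction.map_zero]
      unfold piltz
      rw [Finset.card_eq_zero, Finset.filter_eq_empty_iff]
      intro f hf
      have := Fintype.mem_piFinset.mp hf 0
      simp at this
    have hm : 0 < m := Nat.pos_of_ne_zero hm0
    unfold piltz
    rw [Finset.card_eq_sum_card_fiberwise
      (f := fun f : Fin (n+1) → ℕ => ((∏ i : Fin n, f i.castSucc), f (Fin.last n)))
      (t := m.divisorsAntidiagonal) ?_]
    · rw [pow_succ, ArithmeticFunction.mul_apply]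
      refine Finset.sum_congr rfl fun p hp => ?_
      obtain ⟨hpm, -⟩ := Nat.mem_divisorsAntidiagonal.mp hp
      have hp1 : 0 < p.1 := by
        rcases Nat.eq_zero_or_pos p.1 with h | h
        · exfalso; rw [h, zero_mul] at hpm; exact hm0 hpm.symm
        · exact h
      have hp2 : 0 < p.2 := by
        rcases Nat.eq_zero_or_pos p.2 with h | h
        · exfalso; rw [h, mul_zero] at hpm; exact hm0 hpm.symm
        · exact h
      have hp1m : p.1 ≤ m := Nat.le_of_dvd hm ⟨p.2, hpm.symm⟩
      have hp2m : p.2 ≤ m := Nat.le_of_dvd hm ⟨p.1, by rw [mul_comm]; exact hpm.symm⟩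
      rw [ArithmeticFunction.zeta_apply_ne hp2.ne', mul_one, ← ih]
      rw [← piltz_filter_card n hp1 hp1m]
      apply Finset.card_bij' (fun f _ => Fin.init f) (fun g _ => Fin.snoc g p.2)
      case hi =>
        intro f hf
        simp only [Finset.mem_filter, Fintype.mem_piFinset] at hf ⊢
        obtain ⟨⟨hmem, hm'⟩, hφ⟩ := hf
        refine ⟨fun i => hmem i.castSucc, ?_⟩
        have h1 := congrArg Prod.fst hφ
        simpa [Fin.init] using h1
      case hj =>
        intro g hg
        simp only [Finset.mem_filter, Fintype.mem_piFinset, Finset.mem_Icc] at hg ⊢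
        obtain ⟨hmem, hprod⟩ := hg
        refine ⟨⟨?_, ?_⟩, ?_⟩
        · intro i
          refine Fin.lastCases ?_ (fun j => ?_) i
          · simpa [Fin.snoc_last] using ⟨hp2, hp2m⟩
          · simpa [Fin.snoc_castSucc] using hmem j
        · rw [Fin.prod_univ_castSucc]
          simp only [Fin.snoc_castSucc, Fin.snoc_last]
          rw [hprod, hpm]
        · simp only [Fin.snoc_castSucc, Fin.snoc_last, hprod]
      case left_inv =>
        intro f hf
        simp only [Finset.mem_filter] at hf
        have h2 : f (Fin.last n) = p.2 := congrArg Prod.snd hf.2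
        rw [← h2]
        exact Fin.snoc_init_self f
      case right_inv =>
        intro g hg
        simp [Fin.init_snoc]
    · intro f hf
      rw [Finset.mem_coe, Finset.mem_filter] at hf
      rw [Finset.mem_coe, Nat.mem_divisorsAntidiagonal]
      exact ⟨by rw [← Fin.prod_univ_castSucc]; exact hf.2, hm0⟩

open ArithmeticFunction in
open scoped LSeries.notation in
open scoped ArithmeticFunction.zeta in
lemma piltz_LSeries (n : ℕ) {s : ℂ} (hs : 1 < s.re) :
    LSeriesSummable (fun m => (piltz n m : ℂ)) s ∧
      LSeries (fun m => (piltz n m : ℂ)) s = riemannZeta s ^ n := by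
  have hcoe : ∀ k, (fun m => (piltz k m : ℂ))
      = ↗(((ζ : ArithmeticFunction ℕ) ^ k : ArithmeticFunction ℕ) : ArithmeticFunction ℂ) := by
    intro k; funext m; rw [piltz_eq]; simp [natCoe_apply]
  rw [hcoe]
  have hzeq : ↗(((ζ : ArithmeticFunction ℕ) : ArithmeticFunction ℂ)) = (fun n => (ζ n : ℂ)) :=
    funext fun n => by simp [natCoe_apply]
  have hz : LSeriesSummable (↗(((ζ : ArithmeticFunction ℕ) : ArithmeticFunction ℂ))) s := by
    rw [hzeq]; exact LSeriesSummable_zeta_iff.mpr hs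
  induction n with
  | zero =>
    rw [pow_zero, pow_zero, natCoe_one]
    constructor
    · refine summable_of_ne_finset_zero (s := {1}) fun m hm => ?_
      rcases eq_or_ne m 0 with rfl | h0
      · exact LSeries.term_zero ..
      · rw [LSeries.term_of_ne_zero h0]
        rw [ArithmeticFunction.one_apply_ne (by simpa using hm), zero_div]
    · rw [LSeries]
      rw [tsum_eq_single 1 ?_]
      · rw [LSeries.term_of_ne_zero one_ne_zero]
        simp
      · intro m hm
        rcases eq_or_ne m 0 with rfl | h0
        · exact LSeries.term_zero ..
        · rw [LSeries.term_of_ne_zero h0,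
            ArithmeticFunction.one_apply_ne hm, zero_div]
  | succ k ih =>
    rw [pow_succ, pow_succ, natCoe_mul]
    refine ⟨LSeriesSummable_mul ih.1 hz, ?_⟩
    rw [LSeries_mul' ih.1 hz, ih.2, hzeq, LSeries_zeta_eq_riemannZeta hs]


open MeasureTheory Set Filter Topology

lemma tendsto_pow_mul_exp_neg_mul (ν : ℕ) {c : ℝ} (hc : 0 < c) :
    Tendsto (fun x : ℝ => x ^ ν * Real.exp (-c * x)) atTop (𝓝 0) := by
  have h1 : Tendsto (fun x : ℝ => (c * x) ^ ν * Real.exp (-(c * x))) atTop (𝓝 0) :=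
    (Real.tendsto_pow_mul_exp_neg_atTop_nhds_zero ν).comp (tendsto_id.const_mul_atTop hc)
  have h2 := h1.const_mul ((c : ℝ) ^ ν)⁻¹
  rw [mul_zero] at h2
  refine h2.congr fun x => ?_
  rw [mul_pow, ← mul_assoc, inv_mul_cancel_left₀ (pow_ne_zero _ hc.ne')]
  ring_nf

lemma integrableOn_pow_mul_exp (ν : ℕ) {c : ℝ} (hc : 0 < c) :
    IntegrableOn (fun x : ℝ => x ^ ν * Real.exp (-c * x)) (Ioi 0) := by
  refine integrable_of_isBigO_exp_neg (half_pos hc) ?_ ?_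
  · exact ((continuous_pow ν).mul (Real.continuous_exp.comp (continuous_const.mul continuous_id))).continuousOn
  · have ht : Tendsto (fun x : ℝ => x ^ ν * Real.exp (-(c/2) * x)) atTop (𝓝 0) :=
      tendsto_pow_mul_exp_neg_mul ν (half_pos hc)
    have : (fun x : ℝ => x ^ ν * Real.exp (-c * x))
        = fun x => (x ^ ν * Real.exp (-(c/2) * x)) * Real.exp (-(c/2) * x) := by
      funext x
      rw [mul_assoc, ← Real.exp_add]
      ring_nf
    rw [this]
    simpa using (ht.isBigO_one ℝ).mul (Asymptotics.isBigO_refl (fun x : ℝ => Real.exp (-(c/2) * x)) atTop)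

lemma integrableOn_pow_mul_cexp (ν : ℕ) {s : ℂ} (hσ : 0 < s.re) :
    IntegrableOn (fun u : ℝ => (u : ℂ) ^ ν * Complex.exp (-s * u)) (Ioi 0) := by
  have hmeas : AEStronglyMeasurable (fun u : ℝ => (u : ℂ) ^ ν * Complex.exp (-s * u))
      (volume.restrict (Ioi 0)) := by
    refine Continuous.aestronglyMeasurable ?_
    exact ((Complex.continuous_ofReal.pow ν).mul
      ((Complex.continuous_exp.comp (continuous_const.mul Complex.continuous_ofReal))))
  refine Integrable.mono' (g := fun x : ℝ => x ^ ν * Real.exp (-s.re * x))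
    (integrableOn_pow_mul_exp ν hσ) hmeas ?_
  · filter_upwards [ae_restrict_mem measurableSet_Ioi] with x hx
    rw [norm_mul, norm_pow, Complex.norm_exp]
    simp only [Complex.norm_real, Real.norm_eq_abs, abs_of_pos (mem_Ioi.mp hx)]
    have : (-s * (x : ℂ)).re = -s.re * x := by simp [Complex.mul_re]
    rw [this]

lemma cexp_deriv (s : ℂ) (x : ℝ) :
    HasDerivAt (fun u : ℝ => Complex.exp (-s * u)) (-s * Complex.exp (-s * x)) x := by
  have h := ((hasDerivAt_id (x : ℂ)).const_mul (-s)).cexp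
  have h2 := h.comp_ofReal
  simp only [id, mul_one] at h2
  simpa [mul_comm] using h2

lemma tendsto_cexp_mul_zero {s : ℂ} (hσ : 0 < s.re) (ν : ℕ) (c : ℂ) :
    Filter.Tendsto (fun u : ℝ => c * ((u : ℂ) ^ ν * Complex.exp (-s * u))) atTop (𝓝 0) := by
  have hg : Filter.Tendsto (fun u : ℝ => ‖c‖ * (u ^ ν * Real.exp (-s.re * u))) atTop (𝓝 0) := by
    simpa using (tendsto_pow_mul_exp_neg_mul ν hσ).const_mul ‖c‖
  refine squeeze_zero_norm' ?_ hg
  filter_upwards [eventually_ge_atTop (0 : ℝ)] with u hu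
  rw [norm_mul, norm_mul, norm_pow, Complex.norm_exp]
  have h1 : (-s * (u : ℂ)).re = -s.re * u := by simp [Complex.mul_re]
  rw [h1]
  simp only [Complex.norm_real, Real.norm_eq_abs, abs_of_nonneg hu]
  exact le_refl _

lemma integral_pow_mul_cexp {s : ℂ} (hσ : 0 < s.re) (ν : ℕ) :
    ∫ u in Ioi (0:ℝ), (u : ℂ) ^ ν * Complex.exp (-s * u) = (Nat.factorial ν : ℂ) / s ^ (ν + 1) := by
  have hs0 : s ≠ 0 := fun h => by simp [h] at hσ
  induction ν with
  | zero =>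
    have hderiv : ∀ x ∈ Ici (0:ℝ), HasDerivAt (fun u : ℝ => -(Complex.exp (-s * u) / s))
        ((x : ℂ) ^ 0 * Complex.exp (-s * x)) x := by
      intro x _
      have h := ((cexp_deriv s x).div_const s).neg
      have hval : -(-s * Complex.exp (-s * x) / s) = (x : ℂ) ^ 0 * Complex.exp (-s * x) := by
        field_simp
      rwa [hval] at h
    have htend : Filter.Tendsto (fun u : ℝ => -(Complex.exp (-s * u) / s)) atTop (𝓝 0) := by
      have := tendsto_cexp_mul_zero hσ 0 (-(1/s))
      refine this.congr fun u => ?_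
      push_cast
      field_simp
    have := integral_Ioi_of_hasDerivAt_of_tendsto' hderiv
      (integrableOn_pow_mul_cexp 0 hσ) htend
    rw [this]
    simp
  | succ ν ih =>
    set F : ℝ → ℂ := fun u : ℝ => -((u : ℂ) ^ (ν + 1) * Complex.exp (-s * u) / s) with hF
    set f' : ℝ → ℂ := fun x : ℝ =>
      (x : ℂ) ^ (ν + 1) * Complex.exp (-s * x)
        - ((ν : ℂ) + 1) / s * ((x : ℂ) ^ ν * Complex.exp (-s * x)) with hf'
    have hderiv : ∀ x ∈ Ici (0:ℝ), HasDerivAt F (f' x) x := by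
      intro x _
      have hpow : HasDerivAt (fun u : ℝ => (u : ℂ) ^ (ν + 1))
          (((ν : ℂ) + 1) * (x : ℂ) ^ ν) x := by
        have := (hasDerivAt_pow (ν + 1) (x : ℂ)).comp_ofReal
        simpa using this
      have h := ((hpow.mul (cexp_deriv s x)).div_const s).neg
      have hval : -((((ν : ℂ) + 1) * (x : ℂ) ^ ν * Complex.exp (-s * x)
          + (x : ℂ) ^ (ν + 1) * (-s * Complex.exp (-s * x))) / s) = f' x := by
        rw [hf']
        field_simp
        ring
      rwa [hval] at h
    have htend : Filter.Tendsto F atTop (𝓝 0) := by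
      have := tendsto_cexp_mul_zero hσ (ν + 1) (-(1/s))
      refine this.congr fun u => ?_
      rw [hF]
      field_simp
    have hint1 : IntegrableOn (fun x : ℝ => (x : ℂ) ^ (ν + 1) * Complex.exp (-s * x)) (Ioi 0) :=
      integrableOn_pow_mul_cexp (ν + 1) hσ
    have hint2 : IntegrableOn (fun x : ℝ =>
        ((ν : ℂ) + 1) / s * ((x : ℂ) ^ ν * Complex.exp (-s * x))) (Ioi 0) :=
      (integrableOn_pow_mul_cexp ν hσ).const_mul _
    have hfint : IntegrableOn f' (Ioi 0) := hint1.sub hint2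
    have key := integral_Ioi_of_hasDerivAt_of_tendsto' hderiv hfint htend
    have hF0 : F 0 = 0 := by simp [hF]
    rw [hF0, sub_zero] at key
    rw [hf'] at key
    rw [integral_sub hint1 hint2, MeasureTheory.integral_const_mul, ih] at key
    have : ∫ u in Ioi (0:ℝ), (u : ℂ) ^ (ν + 1) * Complex.exp (-s * u)
        = ((ν : ℂ) + 1) / s * ((Nat.factorial ν : ℂ) / s ^ (ν + 1)) := by
      linear_combination key
    rw [this, Nat.factorial_succ]
    push_cast
    rw [div_mul_div_comm, pow_succ]
    ring_nf

lemma integral_cexp_mul_laguerre {s : ℂ} (hσ : 0 < s.re) (n : ℕ) :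
    ∫ u in Ioi (0:ℝ), Complex.exp (-s * u) * (laguerre n u : ℂ) = (s - 1) ^ n / s ^ (n + 1) := by
  have hs0 : s ≠ 0 := fun h => by simp [h] at hσ
  have hptwise : ∀ u : ℝ, Complex.exp (-s * u) * (laguerre n u : ℂ)
      = ∑ ν ∈ Finset.range (n + 1),
          ((Nat.choose n ν : ℂ) * (-1) ^ ν / (Nat.factorial ν : ℂ))
            * ((u : ℂ) ^ ν * Complex.exp (-s * u)) := by
    intro u
    rw [laguerre]
    push_cast
    rw [Finset.mul_sum]
    refine Finset.sum_congr rfl fun ν _ => ?_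
    rw [neg_pow]
    ring
  calc ∫ u in Ioi (0:ℝ), Complex.exp (-s * u) * (laguerre n u : ℂ)
      = ∫ u in Ioi (0:ℝ), ∑ ν ∈ Finset.range (n + 1),
          ((Nat.choose n ν : ℂ) * (-1) ^ ν / (Nat.factorial ν : ℂ))
            * ((u : ℂ) ^ ν * Complex.exp (-s * u)) := by
        exact MeasureTheory.integral_congr_ae (Filter.Eventually.of_forall hptwise)
    _ = ∑ ν ∈ Finset.range (n + 1), ((Nat.choose n ν : ℂ) * (-1) ^ ν / (Nat.factorial ν : ℂ))
            * ∫ u in Ioi (0:ℝ), (u : ℂ) ^ ν * Complex.exp (-s * u) := by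
        rw [MeasureTheory.integral_finset_sum]
        · exact Finset.sum_congr rfl fun ν _ => MeasureTheory.integral_const_mul ..
        · exact fun ν _ => (integrableOn_pow_mul_cexp ν hσ).const_mul _
    _ = ∑ ν ∈ Finset.range (n + 1), (-1) ^ ν * s ^ (n - ν) * (Nat.choose n ν : ℂ) / s ^ (n + 1) := by
        refine Finset.sum_congr rfl fun ν hν => ?_
        have hνn : ν ≤ n := Nat.lt_succ_iff.mp (Finset.mem_range.mp hν)
        rw [integral_pow_mul_cexp hσ ν]
        have hfac : (Nat.factorial ν : ℂ) ≠ 0 := Nat.cast_ne_zero.mpr (Nat.factorial_ne_zero ν)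
        field_simp
        rw [show n + 1 = (n - ν) + (ν + 1) from by omega, pow_add]
        ring
    _ = (s - 1) ^ n / s ^ (n + 1) := by
        rw [← Finset.sum_div]
        congr 1
        have := add_pow (-1 : ℂ) s n
        rw [show (-1 : ℂ) + s = s - 1 from by ring] at this
        rw [← this]

lemma cexp_laguerre_eq {s : ℂ} (n : ℕ) (u : ℝ) : Complex.exp (-s * u) * (laguerre n u : ℂ)
      = ∑ ν ∈ Finset.range (n + 1),
          ((Nat.choose n ν : ℂ) * (-1) ^ ν / (Nat.factorial ν : ℂ))
            * ((u : ℂ) ^ ν * Complex.exp (-s * u)) := by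
  rw [laguerre]
  push_cast
  rw [Finset.mul_sum]
  refine Finset.sum_congr rfl fun ν _ => ?_
  rw [neg_pow]
  ring

lemma integrableOn_cexp_mul_laguerre {s : ℂ} (hσ : 0 < s.re) (n : ℕ) :
    IntegrableOn (fun u : ℝ => Complex.exp (-s * u) * (laguerre n u : ℂ)) (Ioi 0) := by
  have h : IntegrableOn (fun u : ℝ => ∑ ν ∈ Finset.range (n + 1),
      ((Nat.choose n ν : ℂ) * (-1) ^ ν / (Nat.factorial ν : ℂ))
        * ((u : ℂ) ^ ν * Complex.exp (-s * u))) (Ioi 0) :=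
    MeasureTheory.integrable_finset_sum _ fun ν _ => (integrableOn_pow_mul_cexp ν hσ).const_mul _
  exact h.congr (Filter.Eventually.of_forall fun u => (cexp_laguerre_eq n u).symm)

lemma integral_Ioi_shift {E : Type*} [NormedAddCommGroup E] [NormedSpace ℝ E]
    (f : ℝ → E) (a : ℝ) :
    ∫ x in Ioi a, f x = ∫ u in Ioi (0:ℝ), f (u + a) := by
  have hemb : MeasurableEmbedding (fun u : ℝ => u + a) :=
    (Homeomorph.addRight a).measurableEmbedding
  have hmap : Measure.map (fun u : ℝ => u + a) volume = volume :=
    map_add_right_eq_self volume a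
  conv_lhs => rw [← hmap]
  rw [hemb.setIntegral_map]
  congr 1
  ext u
  simp

lemma integrableOn_Ioi_shift_iff {E : Type*} [NormedAddCommGroup E] (f : ℝ → E) (a : ℝ) :
    IntegrableOn (fun u => f (u + a)) (Ioi 0) ↔ IntegrableOn f (Ioi a) := by
  have hemb : MeasurableEmbedding (fun u : ℝ => u + a) :=
    (Homeomorph.addRight a).measurableEmbedding
  have hmap : Measure.map (fun u : ℝ => u + a) volume = volume :=
    map_add_right_eq_self volume a
  have hpre : (fun u : ℝ => u + a) ⁻¹' (Ioi a) = Ioi 0 := by ext u; simp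
  rw [IntegrableOn, IntegrableOn]
  conv_rhs => rw [← hmap]
  rw [Measure.restrict_map hemb.measurable measurableSet_Ioi, hemb.integrable_map_iff, hpre]
  rfl


noncomputable def G (n : ℕ) (s : ℂ) (m : ℕ) (t : ℝ) : ℂ :=
  Complex.exp (-s * t) * (((piltz n (m + 1) : ℝ) *
    (if Real.log ((m : ℝ) + 1) < t then laguerre n (t - Real.log ((m : ℝ) + 1)) else 0) : ℝ) : ℂ)

lemma G_eq (n : ℕ) (s : ℂ) (m : ℕ) : G n s m = fun t => (piltz n (m + 1) : ℂ) *
    Set.indicator (Ioi (Real.log ((m : ℝ) + 1)))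
      (fun t => Complex.exp (-s * t) * (laguerre n (t - Real.log ((m : ℝ) + 1)) : ℂ)) t := by
  funext t
  unfold G
  by_cases h : Real.log ((m : ℝ) + 1) < t
  · rw [Set.indicator_of_mem (mem_Ioi.mpr h), if_pos h]
    push_cast
    ring
  · rw [Set.indicator_of_notMem (by simpa using h), if_neg h]
    simp

lemma logm_nonneg (m : ℕ) : 0 ≤ Real.log ((m : ℝ) + 1) := by
  refine Real.log_nonneg (by simp)

lemma shifted_eq (n : ℕ) (s : ℂ) (L : ℝ) (u : ℝ) :
    Complex.exp (-s * ((u + L : ℝ) : ℂ)) * (laguerre n ((u + L) - L) : ℂ)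
      = Complex.exp (-s * L) * (Complex.exp (-s * u) * (laguerre n u : ℂ)) := by
  rw [add_sub_cancel_right]
  push_cast
  rw [mul_add, Complex.exp_add]
  ring

lemma G_integrableOn {s : ℂ} (hσ : 0 < s.re) (n m : ℕ) :
    IntegrableOn (G n s m) (Ioi 0) := by
  rw [G_eq]
  set L := Real.log ((m : ℝ) + 1) with hL
  refine Integrable.const_mul ?_ _
  rw [integrable_indicator_iff measurableSet_Ioi]
  have hres : (volume.restrict (Ioi (0:ℝ))).restrict (Ioi L) = volume.restrict (Ioi L) := by
    rw [Measure.restrict_restrict measurableSet_Ioi, Set.Ioi_inter_Ioi,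
      max_eq_left (logm_nonneg m)]
  show Integrable _ ((volume.restrict (Ioi (0:ℝ))).restrict (Ioi L))
  rw [hres]
  show IntegrableOn _ (Ioi L) volume
  rw [← integrableOn_Ioi_shift_iff _ L]
  refine (((integrableOn_cexp_mul_laguerre hσ n).const_mul
    (Complex.exp (-s * L))).congr (Eventually.of_forall fun u => ?_))
  exact (shifted_eq n s L u).symm

lemma G_integral {s : ℂ} (hσ : 0 < s.re) (n m : ℕ) :
    ∫ t in Ioi (0:ℝ), G n s m t = (piltz n (m + 1) : ℂ) *
      (Complex.exp (-s * Real.log ((m : ℝ) + 1)) * ((s - 1) ^ n / s ^ (n + 1))) := by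
  rw [G_eq]
  set L := Real.log ((m : ℝ) + 1) with hL
  rw [MeasureTheory.integral_const_mul, setIntegral_indicator measurableSet_Ioi,
    Set.Ioi_inter_Ioi, max_eq_right (logm_nonneg m), integral_Ioi_shift]
  congr 1
  calc ∫ u in Ioi (0:ℝ), Complex.exp (-s * ((u + L : ℝ) : ℂ)) * (laguerre n ((u + L) - L) : ℂ)
      = ∫ u in Ioi (0:ℝ), Complex.exp (-s * L)
          * (Complex.exp (-s * u) * (laguerre n u : ℂ)) := by
        exact integral_congr_ae (Eventually.of_forall fun u => shifted_eq n s L u)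
    _ = Complex.exp (-s * L) * ((s - 1) ^ n / s ^ (n + 1)) := by
        rw [MeasureTheory.integral_const_mul, integral_cexp_mul_laguerre hσ n]

lemma norm_shifted_eq (n : ℕ) (s : ℂ) (L : ℝ) (u : ℝ) :
    ‖Complex.exp (-s * ((u + L : ℝ) : ℂ)) * (laguerre n ((u + L) - L) : ℂ)‖
      = Real.exp (-s.re * L) * ‖Complex.exp (-s * u) * (laguerre n u : ℂ)‖ := by
  rw [shifted_eq, norm_mul, Complex.norm_exp]
  congr 2
  simp [Complex.mul_re]

lemma G_norm_integral {s : ℂ} (hσ : 0 < s.re) (n m : ℕ) :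
    ∫ t in Ioi (0:ℝ), ‖G n s m t‖ = (piltz n (m + 1) : ℝ) *
      (Real.exp (-s.re * Real.log ((m : ℝ) + 1)) *
        ∫ u in Ioi (0:ℝ), ‖Complex.exp (-s * u) * (laguerre n u : ℂ)‖) := by
  set L := Real.log ((m : ℝ) + 1) with hL
  have hnorm : ∀ t : ℝ, ‖G n s m t‖ = (piltz n (m + 1) : ℝ) *
      Set.indicator (Ioi L)
        (fun t => ‖Complex.exp (-s * t) * (laguerre n (t - L) : ℂ)‖) t := by
    intro t
    rw [G_eq]
    rw [norm_mul, Complex.norm_natCast, ← norm_indicator_eq_indicator_norm]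
  calc ∫ t in Ioi (0:ℝ), ‖G n s m t‖
      = ∫ t in Ioi (0:ℝ), (piltz n (m + 1) : ℝ) * Set.indicator (Ioi L)
          (fun t => ‖Complex.exp (-s * t) * (laguerre n (t - L) : ℂ)‖) t :=
        integral_congr_ae (Eventually.of_forall hnorm)
    _ = (piltz n (m + 1) : ℝ) * ∫ t in Ioi L,
          ‖Complex.exp (-s * t) * (laguerre n (t - L) : ℂ)‖ := by
        rw [MeasureTheory.integral_const_mul, setIntegral_indicator measurableSet_Ioi,
          Set.Ioi_inter_Ioi, max_eq_right (logm_nonneg m)]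
    _ = (piltz n (m + 1) : ℝ) * (Real.exp (-s.re * L) *
          ∫ u in Ioi (0:ℝ), ‖Complex.exp (-s * u) * (laguerre n u : ℂ)‖) := by
        rw [integral_Ioi_shift]
        congr 1
        rw [← MeasureTheory.integral_const_mul]
        exact integral_congr_ae (Eventually.of_forall fun u => norm_shifted_eq n s L u)

theorem laplace_fn (n : ℕ) (hn : 1 ≤ n) (s : ℂ) (hs : 1 < s.re) :
    ∫ t in Set.Ioi (0 : ℝ), Complex.exp (-s * t) *
        ((∑' m : ℕ, (piltz n (m + 1) : ℝ) *
          (if Real.log (m + 1) < t then laguerre n (t - Real.log (m + 1)) else 0) : ℝ) : ℂ) =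
      (s - 1) ^ n * riemannZeta s ^ n / s ^ (n + 1) := by
  have hσ : 0 < s.re := by linarith
  obtain ⟨hsummable, hLval⟩ := piltz_LSeries n hs
  have hpt : ∀ t : ℝ, Complex.exp (-s * t) *
        ((∑' m : ℕ, (piltz n (m + 1) : ℝ) *
          (if Real.log (m + 1) < t then laguerre n (t - Real.log (m + 1)) else 0) : ℝ) : ℂ)
      = ∑' m : ℕ, G n s m t := by
    intro t
    rw [Complex.ofReal_tsum]
    exact (tsum_mul_left).symm
  -- norm integrals
  set K := ∫ u in Ioi (0:ℝ), ‖Complex.exp (-s * u) * (laguerre n u : ℂ)‖ with hK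
  have hterm_norm : ∀ m : ℕ,
      ‖LSeries.term (fun k => (piltz n k : ℂ)) s (m + 1)‖
        = (piltz n (m + 1) : ℝ) * Real.exp (-s.re * Real.log ((m : ℝ) + 1)) := by
    intro m
    rw [LSeries.term_of_ne_zero (Nat.succ_ne_zero m)]
    rw [norm_div, Complex.norm_natCast]
    have hM : (0:ℝ) < (m : ℝ) + 1 := by positivity
    have hcast : ((m + 1 : ℕ) : ℂ) = (((m : ℝ) + 1 : ℝ) : ℂ) := by push_cast; ring
    rw [hcast, Complex.norm_cpow_eq_rpow_re_of_pos hM]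
    rw [Real.rpow_def_of_pos hM, div_eq_mul_inv, ← Real.exp_neg]
    congr 1
    ring
  have hsum : Summable fun m : ℕ => ∫ t in Ioi (0:ℝ), ‖G n s m t‖ := by
    have h1 : Summable (fun m : ℕ =>
        ‖LSeries.term (fun k => (piltz n k : ℂ)) s (m + 1)‖) := by
      have := summable_norm_iff.mpr hsummable
      exact this.comp_injective (add_left_injective 1)
    have h2 := h1.mul_right K
    refine h2.congr fun m => ?_
    rw [G_norm_integral hσ n m, hterm_norm m]
    ring
  have hint : ∀ m : ℕ, Integrable (G n s m) (volume.restrict (Ioi (0:ℝ))) :=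
    fun m => G_integrableOn hσ n m
  calc ∫ t in Set.Ioi (0 : ℝ), Complex.exp (-s * t) *
        ((∑' m : ℕ, (piltz n (m + 1) : ℝ) *
          (if Real.log (m + 1) < t then laguerre n (t - Real.log (m + 1)) else 0) : ℝ) : ℂ)
      = ∫ t in Ioi (0:ℝ), ∑' m : ℕ, G n s m t :=
        integral_congr_ae (Eventually.of_forall hpt)
    _ = ∑' m : ℕ, ∫ t in Ioi (0:ℝ), G n s m t :=
        (integral_tsum_of_summable_integral_norm hint hsum).symm
    _ = ∑' m : ℕ, LSeries.term (fun k => (piltz n k : ℂ)) s (m + 1)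
          * ((s - 1) ^ n / s ^ (n + 1)) := by
        refine tsum_congr fun m => ?_
        rw [G_integral hσ n m, LSeries.term_of_ne_zero (Nat.succ_ne_zero m)]
        have hM : (0:ℝ) < (m : ℝ) + 1 := by positivity
        have hMc : ((m + 1 : ℕ) : ℂ) = (((m : ℝ) + 1 : ℝ) : ℂ) := by push_cast; ring
        have hlog : Complex.exp (-s * (Real.log ((m : ℝ) + 1) : ℂ))
            = (((m + 1 : ℕ) : ℂ) ^ s)⁻¹ := by
          rw [hMc, Complex.cpow_def_of_ne_zero (by
            simpa using Complex.ofReal_ne_zero.mpr hM.ne')]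
          rw [Complex.ofReal_log hM.le, neg_mul, Complex.exp_neg, mul_comm]
        rw [hlog, div_eq_mul_inv]
        ring
    _ = (∑' m : ℕ, LSeries.term (fun k => (piltz n k : ℂ)) s (m + 1))
          * ((s - 1) ^ n / s ^ (n + 1)) := tsum_mul_right
    _ = riemannZeta s ^ n * ((s - 1) ^ n / s ^ (n + 1)) := by
        have h0 := Summable.tsum_eq_zero_add hsummable
        rw [LSeries.term_zero] at h0
        rw [← hLval, LSeries, h0, zero_add]
    _ = (s - 1) ^ n * riemannZeta s ^ n / s ^ (n + 1) := by ring
end
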